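/- arXiv:2502.03854 — 4 statements merged into one kernel-verified Lean document; each statement's English description precedes it below -/
import Mathlib

section
/- Fix a finite MDP, α > 0, κ ∈ [0,1), and bounding functions f and g. For any Ψ : S×𝒜 → ℝ and any policy π, the bounded gap-increasing operator satisfies (T^{fg}_π Ψ)(s,a) ≤ (T^α Ψ)(s,a) for all (s,a) ∈ S×𝒜. -/
open Finset Filter

noncomputable section

variable {S A : Type*}

/-- A Markovian transition kernel: nonnegative and summing to one over next states. -/
def isKernel [Fintype S] (P : S → A → S → ℝ) : Prop :=
  (∀ s a s', 0 ≤ P s a s') ∧ ∀ s a, ∑ s', P s a s' = 1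

/-- A (Markovian, stochastic) policy: a probability distribution over actions per state. -/
def isPolicy [Fintype A] (π : S → A → ℝ) : Prop :=
  (∀ s a, 0 ≤ π s a) ∧ ∀ s, ∑ a, π s a = 1

/-- A bounding function with constant `c > 0`: nondecreasing, `h 0 = 0`,
`0 ≤ h x ≤ x` for `x ≥ 0`, `x ≤ h x ≤ 0` for `x ≤ 0`, and `|h x| ≤ c`. -/
def isBounding (h : ℝ → ℝ) (c : ℝ) : Prop :=
  Monotone h ∧ h 0 = 0 ∧ (∀ x, 0 ≤ x → 0 ≤ h x ∧ h x ≤ x) ∧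
    (∀ x, x ≤ 0 → x ≤ h x ∧ h x ≤ 0) ∧ (∀ x, |h x| ≤ c) ∧ 0 < c

/-- The soft (log-sum-exp) state value `(L^α Ψ)(s) = α log ∑_a exp (Ψ(s,a)/α)`. -/
def lse [Fintype A] (α : ℝ) (Ψ : S → A → ℝ) (s : S) : ℝ :=
  α * Real.log (∑ a, Real.exp (Ψ s a / α))

/-- The softmax (Boltzmann) policy `G^α(Ψ)`. -/
def gibbs [Fintype A] (α : ℝ) (Ψ : S → A → ℝ) (s : S) (a : A) : ℝ :=
  Real.exp (Ψ s a / α) / ∑ b, Real.exp (Ψ s b / α)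

/-- The soft advantage `A_Ψ(s,a) = Ψ(s,a) − (L^α Ψ)(s)`. -/
def adv [Fintype A] (α : ℝ) (Ψ : S → A → ℝ) (s : S) (a : A) : ℝ :=
  Ψ s a - lse α Ψ s

/-- `(P V)(s,a) = ∑_{s'} P(s'|s,a) V(s')`. -/
def PV [Fintype S] (P : S → A → S → ℝ) (V : S → ℝ) (s : S) (a : A) : ℝ :=
  ∑ s', P s a s' * V s'

/-- `(P^π W)(s) = ∑_a π(a|s) ∑_{s'} P(s'|s,a) W(s')`. -/
def Ppi [Fintype S] [Fintype A] (P : S → A → S → ℝ) (π : S → A → ℝ)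
    (W : S → ℝ) (s : S) : ℝ :=
  ∑ a, π s a * ∑ s', P s a s' * W s'

/-- Entropy of a policy: `H(π)(s) = −∑_a π(a|s) log π(a|s)`. -/
def ent [Fintype A] (π : S → A → ℝ) (s : S) : ℝ :=
  -∑ a, π s a * Real.log (π s a)

/-- KL divergence between two policies at a state. -/
def klDiv [Fintype A] (π₁ π₂ : S → A → ℝ) (s : S) : ℝ :=
  ∑ a, π₁ s a * Real.log (π₁ s a / π₂ s a)

/-- The soft Bellman optimality operator
`(T^α Ψ)(s,a) = R(s,a) + γ ∑_{s'} P(s'|s,a) (L^α Ψ)(s')`. -/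
def softBellman [Fintype S] [Fintype A] (P : S → A → S → ℝ) (R : S → A → ℝ)
    (γ α : ℝ) (Ψ : S → A → ℝ) (s : S) (a : A) : ℝ :=
  R s a + γ * ∑ s', P s a s' * lse α Ψ s'

/-- A sandwiched operator:
`(T^α Ψ)(s,a) − κ((L^α Ψ)(s) − Ψ(s,a)) ≤ (T' Ψ)(s,a) ≤ (T^α Ψ)(s,a)` for all `Ψ, s, a`. -/
def Sandwiched [Fintype S] [Fintype A] (P : S → A → S → ℝ) (R : S → A → ℝ)
    (γ α κ : ℝ) (T' : (S → A → ℝ) → S → A → ℝ) : Prop :=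
  ∀ Ψ s a, softBellman P R γ α Ψ s a - κ * (lse α Ψ s - Ψ s a) ≤ T' Ψ s a ∧
    T' Ψ s a ≤ softBellman P R γ α Ψ s a

/-- The bounded gap-increasing operator `T^{fg}_π`. -/
def balOp [Fintype S] [Fintype A] (P : S → A → S → ℝ) (R : S → A → ℝ)
    (γ α κ : ℝ) (f g : ℝ → ℝ) (π Ψ : S → A → ℝ) (s : S) (a : A) : ℝ :=
  R s a + κ * f (adv α Ψ s a) +
    γ * ∑ s', P s a s' * ∑ a', π s' a' * (Ψ s' a' - g (adv α Ψ s' a'))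

/-- The BAL sequence `Ψ_{k+1} = T^{fg}_{π_{k+1}} Ψ_k` with `π_{k+1} = G^α(Ψ_k)`. -/
def balSeq [Fintype S] [Fintype A] (P : S → A → S → ℝ) (R : S → A → ℝ)
    (γ α κ : ℝ) (f g : ℝ → ℝ) (Ψ0 : S → A → ℝ) : ℕ → S → A → ℝ
  | 0 => Ψ0
  | k + 1 => balOp P R γ α κ f g (gibbs α (balSeq P R γ α κ f g Ψ0 k))
      (balSeq P R γ α κ f g Ψ0 k)

/-- The BAL policy sequence: `π_0` is uniform and `π_{k+1} = G^α(Ψ_k)`. -/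
def balPol [Fintype S] [Fintype A] (P : S → A → S → ℝ) (R : S → A → ℝ)
    (γ α κ : ℝ) (f g : ℝ → ℝ) (Ψ0 : S → A → ℝ) : ℕ → S → A → ℝ
  | 0 => fun _ _ => 1 / (Fintype.card A : ℝ)
  | k + 1 => gibbs α (balSeq P R γ α κ f g Ψ0 k)

/-- Hard (non-regularized) state value `V(s) = max_a Ψ(s,a)`. -/
def hardV [Fintype A] [Nonempty A] (Ψ : S → A → ℝ) (s : S) : ℝ :=
  Finset.univ.sup' Finset.univ_nonempty (Ψ s)

/-- Hard advantage `A(s,a) = Ψ(s,a) − V(s)`. -/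
def hardAdv [Fintype A] [Nonempty A] (Ψ : S → A → ℝ) (s : S) (a : A) : ℝ :=
  Ψ s a - hardV Ψ s

/-- Hard Bellman optimality operator `(T Ψ)(s,a) = R(s,a) + γ ∑_{s'} P(s'|s,a) max_b Ψ(s',b)`. -/
def hardBellman [Fintype S] [Fintype A] [Nonempty A] (P : S → A → S → ℝ)
    (R : S → A → ℝ) (γ : ℝ) (Ψ : S → A → ℝ) (s : S) (a : A) : ℝ :=
  R s a + γ * ∑ s', P s a s' * hardV Ψ s'

/-- Hard bounded gap-increasing operator. -/
def hardBalOp [Fintype S] [Fintype A] [Nonempty A] (P : S → A → S → ℝ)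
    (R : S → A → ℝ) (γ κ : ℝ) (f g : ℝ → ℝ) (π Ψ : S → A → ℝ) (s : S) (a : A) : ℝ :=
  R s a + κ * f (hardAdv Ψ s a) +
    γ * ∑ s', P s a s' * ∑ a', π s' a' * (Ψ s' a' - g (hardAdv Ψ s' a'))

/-! Since `α > 0`, log-sum-exp dominates each of its arguments, so every soft advantage
`A_Ψ` is nonpositive. On nonpositive arguments a bounding function `h` satisfies
`x ≤ h x ≤ 0`: hence `κ f(A_Ψ) ≤ 0`, and `Ψ - g(A_Ψ) ≤ Ψ - A_Ψ = L^α Ψ` pointwise, a bound that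
survives averaging over `π` and `P`. -/

theorem isBounding.apply_nonpos {h : ℝ → ℝ} {c x : ℝ} (hh : isBounding h c) (hx : x ≤ 0) :
    h x ≤ 0 :=
  (hh.2.2.2.1 x hx).2

theorem isBounding.le_apply_of_nonpos {h : ℝ → ℝ} {c x : ℝ} (hh : isBounding h c) (hx : x ≤ 0) :
    x ≤ h x :=
  (hh.2.2.2.1 x hx).1

theorem isPolicy.sum_mul_le [Fintype A] {π : S → A → ℝ} (hπ : isPolicy π) (s : S)
    {x : A → ℝ} {c : ℝ} (hx : ∀ a, x a ≤ c) : ∑ a, π s a * x a ≤ c :=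
  calc ∑ a, π s a * x a ≤ ∑ a, π s a * c :=
        sum_le_sum fun a _ => mul_le_mul_of_nonneg_left (hx a) (hπ.1 s a)
    _ = c := by rw [← sum_mul, hπ.2 s, one_mul]

theorem le_lse [Fintype A] {α : ℝ} (hα : 0 < α) (Ψ : S → A → ℝ) (s : S) (a : A) :
    Ψ s a ≤ lse α Ψ s := by
  have hpos : 0 < ∑ b, Real.exp (Ψ s b / α) :=
    sum_pos (fun b _ => Real.exp_pos _) ⟨a, mem_univ a⟩
  rw [lse, ← div_le_iff₀' hα, Real.le_log_iff_exp_le hpos]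
  exact single_le_sum (f := fun b => Real.exp (Ψ s b / α)) (fun b _ => (Real.exp_pos _).le)
    (mem_univ a)

theorem adv_nonpos [Fintype A] {α : ℝ} (hα : 0 < α) (Ψ : S → A → ℝ) (s : S) (a : A) :
    adv α Ψ s a ≤ 0 :=
  sub_nonpos.mpr (le_lse hα Ψ s a)

theorem sub_apply_adv_le_lse [Fintype A] {α c : ℝ} {g : ℝ → ℝ} (hα : 0 < α)
    (hg : isBounding g c) (Ψ : S → A → ℝ) (s : S) (a : A) :
    Ψ s a - g (adv α Ψ s a) ≤ lse α Ψ s := by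
  have hadv : adv α Ψ s a = Ψ s a - lse α Ψ s := rfl
  linarith [hg.le_apply_of_nonpos (adv_nonpos hα Ψ s a)]

theorem balOp_le_softBellman_general [Fintype S] [Fintype A]
    (P : S → A → S → ℝ) (R : S → A → ℝ) (γ α κ cf cg : ℝ) (f g : ℝ → ℝ)
    (hP : isKernel P)
    (hγ0 : 0 < γ) (hα : 0 < α) (hκ0 : 0 ≤ κ)
    (hf : isBounding f cf) (hg : isBounding g cg)
    (Ψ : S → A → ℝ) (pol : S → A → ℝ) (hpol : isPolicy pol) :
    ∀ s a, balOp P R γ α κ f g pol Ψ s a ≤ softBellman P R γ α Ψ s a := by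
  intro s a
  have hbonus : κ * f (adv α Ψ s a) ≤ 0 :=
    mul_nonpos_of_nonneg_of_nonpos hκ0 (hf.apply_nonpos (adv_nonpos hα Ψ s a))
  have hnext : ∑ s', P s a s' * ∑ a', pol s' a' * (Ψ s' a' - g (adv α Ψ s' a'))
      ≤ ∑ s', P s a s' * lse α Ψ s' :=
    sum_le_sum fun s' _ => mul_le_mul_of_nonneg_left
      (hpol.sum_mul_le s' (sub_apply_adv_le_lse hα hg Ψ s')) (hP.1 s a s')
  unfold balOp softBellman
  linarith [mul_le_mul_of_nonneg_left hnext hγ0.le]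

/-- the bounded gap-increasing operator is dominated by the soft
Bellman optimality operator. -/
theorem balOp_le_softBellman [Fintype S] [Fintype A] [Nonempty S] [Nonempty A]
    (P : S → A → S → ℝ) (R : S → A → ℝ) (Rmax γ α κ cf cg : ℝ) (f g : ℝ → ℝ)
    (hP : isKernel P) (hR : ∀ s a, |R s a| ≤ Rmax) (hRmax : 0 ≤ Rmax)
    (hγ0 : 0 < γ) (hγ1 : γ < 1) (hα : 0 < α) (hκ0 : 0 ≤ κ) (hκ1 : κ < 1)
    (hf : isBounding f cf) (hg : isBounding g cg)
    (Ψ : S → A → ℝ) (pol : S → A → ℝ) (hpol : isPolicy pol) :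
    ∀ s a, balOp P R γ α κ f g pol Ψ s a ≤ softBellman P R γ α Ψ s a :=
  balOp_le_softBellman_general P R γ α κ cf cg f g hP hγ0 hα hκ0 hf hg Ψ pol hpol

end
end

section
/- Fix a finite MDP, κ ∈ [0,1), and bounding functions f and g. For Ψ : S×𝒜 → ℝ define the hard value V(s) = max_{a∈𝒜} Ψ(s,a), the hard advantage A(s,a) = Ψ(s,a) − V(s), the hard Bellman optimality operator (T Ψ)(s,a) = R(s,a) + γ ∑_{s'} P(s'|s,a) max_{b} Ψ(s',b), and the hard bounded gap-increasing operator (T^{fg}_π Ψ)(s,a) = R(s,a) + κ f(A(s,a)) + γ ∑_{s'} P(s'|s,a) ∑_{a'} π(a'|s') (Ψ(s',a') − g(A(s',a'))). Let π be any greedy policy for Ψ, i.e., a policy with π(a|s) > 0 only if Ψ(s,a) = V(s). Then for all (s,a): (T Ψ)(s,a) − κ(V(s) − Ψ(s,a)) ≤ (T^{fg}_π Ψ)(s,a) ≤ (T Ψ)(s,a). (Hence by Bellemare et al.'s criterion the operator is optimality-preserving and gap-increasing.) -/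
open Finset Filter

noncomputable section

variable {S A : Type*}

/-! For a greedy policy every action it plays has advantage `0`, and `g 0 = 0`, so the
next-state term of `T^{fg}_π Ψ` collapses to `max_b Ψ(s', b)`. Hence
`T^{fg}_π Ψ = T Ψ + κ f(A)`, and since `A ≤ 0` the bounding property `A ≤ f(A) ≤ 0`
gives the two inequalities. -/

def IsGreedy [Fintype A] [Nonempty A] (Ψ π : S → A → ℝ) : Prop :=
  ∀ s a, 0 < π s a → Ψ s a = hardV Ψ s

theorem sum_mul_eq_of_support [Fintype A] {π : S → A → ℝ} (hπ : isPolicy π) {s : S}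
    {u : A → ℝ} {c : ℝ} (hu : ∀ a, 0 < π s a → u a = c) : ∑ a, π s a * u a = c := by
  have hterm : ∀ a ∈ Finset.univ, π s a * u a = π s a * c := by
    intro a _
    rcases (hπ.1 s a).eq_or_lt with hzero | hpos
    · rw [← hzero, zero_mul, zero_mul]
    · rw [hu a hpos]
  rw [Finset.sum_congr rfl hterm, ← Finset.sum_mul, hπ.2 s, one_mul]

section Hard

variable [Fintype A] [Nonempty A]

theorem le_hardV (Ψ : S → A → ℝ) (s : S) (a : A) : Ψ s a ≤ hardV Ψ s :=
  Finset.le_sup' (Ψ s) (Finset.mem_univ a)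

theorem hardAdv_nonpos (Ψ : S → A → ℝ) (s : S) (a : A) : hardAdv Ψ s a ≤ 0 :=
  sub_nonpos.mpr (le_hardV Ψ s a)

theorem sum_mul_sub_hardAdv_of_isGreedy {g : ℝ → ℝ} (hg : g 0 = 0) {Ψ π : S → A → ℝ}
    (hπ : isPolicy π) (hgreedy : IsGreedy Ψ π) (s : S) :
    ∑ a, π s a * (Ψ s a - g (hardAdv Ψ s a)) = hardV Ψ s :=
  sum_mul_eq_of_support hπ fun a hpos => by
    rw [hardAdv, hgreedy s a hpos, sub_self, hg, sub_zero]

theorem hardBalOp_eq_of_isGreedy [Fintype S] (P : S → A → S → ℝ) (R : S → A → ℝ)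
    (γ κ : ℝ) (f : ℝ → ℝ) {g : ℝ → ℝ} (hg : g 0 = 0) {Ψ π : S → A → ℝ}
    (hπ : isPolicy π) (hgreedy : IsGreedy Ψ π) (s : S) (a : A) :
    hardBalOp P R γ κ f g π Ψ s a = hardBellman P R γ Ψ s a + κ * f (hardAdv Ψ s a) := by
  simp only [hardBalOp, hardBellman, sum_mul_sub_hardAdv_of_isGreedy hg hπ hgreedy]
  ring

end Hard

theorem hardBalOp_sandwich_general [Fintype S] [Fintype A] [Nonempty A]
    (P : S → A → S → ℝ) (R : S → A → ℝ) (γ κ cf cg : ℝ) (f g : ℝ → ℝ)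
    (hκ0 : 0 ≤ κ)
    (hf : isBounding f cf) (hg : isBounding g cg)
    (Ψ : S → A → ℝ) (pol : S → A → ℝ) (hpol : isPolicy pol)
    (hgreedy : ∀ s a, 0 < pol s a → Ψ s a = hardV Ψ s) :
    ∀ s a, hardBellman P R γ Ψ s a - κ * (hardV Ψ s - Ψ s a) ≤
        hardBalOp P R γ κ f g pol Ψ s a ∧
      hardBalOp P R γ κ f g pol Ψ s a ≤ hardBellman P R γ Ψ s a := by
  intro s a
  rw [hardBalOp_eq_of_isGreedy P R γ κ f hg.2.1 hpol hgreedy s a]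
  obtain ⟨hf_ge, hf_nonpos⟩ := hf.2.2.2.1 _ (hardAdv_nonpos Ψ s a)
  have hgap : hardV Ψ s - Ψ s a = -hardAdv Ψ s a := (neg_sub _ _).symm
  rw [hgap]
  constructor
  · linarith [mul_le_mul_of_nonneg_left hf_ge hκ0]
  · linarith [mul_nonpos_of_nonneg_of_nonpos hκ0 hf_nonpos]

/-- for a greedy policy, the hard bounded gap-increasing operator is
sandwiched between `T Ψ − κ(V − Ψ)` and `T Ψ` (hence, by Bellemare et al.'s
criterion, it is optimality-preserving and gap-increasing). -/
theorem hardBalOp_sandwich [Fintype S] [Fintype A] [Nonempty S] [Nonempty A]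
    (P : S → A → S → ℝ) (R : S → A → ℝ) (Rmax γ κ cf cg : ℝ) (f g : ℝ → ℝ)
    (hP : isKernel P) (hR : ∀ s a, |R s a| ≤ Rmax) (hRmax : 0 ≤ Rmax)
    (hγ0 : 0 < γ) (hγ1 : γ < 1) (hκ0 : 0 ≤ κ) (hκ1 : κ < 1)
    (hf : isBounding f cf) (hg : isBounding g cg)
    (Ψ : S → A → ℝ) (pol : S → A → ℝ) (hpol : isPolicy pol)
    (hgreedy : ∀ s a, 0 < pol s a → Ψ s a = hardV Ψ s) :
    ∀ s a, hardBellman P R γ Ψ s a - κ * (hardV Ψ s - Ψ s a) ≤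
        hardBalOp P R γ κ f g pol Ψ s a ∧
      hardBalOp P R γ κ f g pol Ψ s a ≤ hardBellman P R γ Ψ s a :=
  hardBalOp_sandwich_general P R γ κ cf cg f g hκ0 hf hg Ψ pol hpol hgreedy

end
end

section
/- (Entropy-bonus reduction bound.) Let 𝒜 be a finite nonempty set, α > 0, and let g be a bounding function. Set Δ̄_g = sup_{y<0} (1 − g(y)/y). Then 0 ≤ Δ̄_g ≤ 1, and for every probability vector π on 𝒜 with π(a) > 0 for all a: ∑_{a∈𝒜} π(a)·(−α·log π(a) + g(α·log π(a))) ≤ α·Δ̄_g·log|𝒜|, where |𝒜| is the cardinality of 𝒜. -/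
open Finset Filter

noncomputable section

variable {S A : Type*}

/-!
For `y = α log π(a) ≤ 0` the summand's bracket is `-y + g y = -y (1 - g y / y) ≤ -y Δ̄_g`, and
`1 - g y / y ∈ [0, 1]` because `y ≤ g y ≤ 0`. Summing against `π` bounds the left side by
`α Δ̄_g` times the Shannon entropy of `π`, which is at most `log |𝒜|` by concavity of
`x ↦ -x log x` (Jensen against the uniform weights).
-/

namespace Real

theorem sum_negMulLog_le_log_card {ι : Type*} [Fintype ι] (p : ι → ℝ) (hp : ∀ i, 0 ≤ p i)
    (hsum : ∑ i, p i = 1) : ∑ i, negMulLog (p i) ≤ log (Fintype.card ι : ℝ) := by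
  have : Nonempty ι := by
    by_contra h
    simp [not_nonempty_iff.mp h] at hsum
  have hn : (0 : ℝ) < Fintype.card ι := Nat.cast_pos.mpr Fintype.card_pos
  have hjensen := concaveOn_negMulLog.le_map_sum (t := univ) (w := fun _ => (Fintype.card ι : ℝ)⁻¹)
    (p := p) (fun _ _ => by positivity) (by simp [Finset.card_univ, hn.ne'])
    (fun i _ => Set.mem_Ici.mpr (hp i))
  simp only [smul_eq_mul, ← mul_sum, hsum, mul_one] at hjensen
  rw [negMulLog, log_inv, neg_mul_neg] at hjensen
  exact le_of_mul_le_mul_left hjensen (inv_pos.mpr hn)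

end Real

section ReductionRatio

variable {g : ℝ → ℝ}

/-- The paper's constant `Δ̄_g` is `sSup (reductionRatio g '' Set.Iio 0)`. -/
def reductionRatio (g : ℝ → ℝ) (y : ℝ) : ℝ := 1 - g y / y

theorem reductionRatio_mem_Icc (hg : ∀ x, x ≤ 0 → x ≤ g x ∧ g x ≤ 0) {y : ℝ} (hy : y < 0) :
    reductionRatio g y ∈ Set.Icc 0 1 := by
  obtain ⟨hlow, hup⟩ := hg y hy.le
  have hratio_nonneg : 0 ≤ g y / y := div_nonneg_of_nonpos hup hy.le
  have hratio_le_one : g y / y ≤ 1 := (div_le_one_of_neg hy).mpr hlow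
  unfold reductionRatio
  constructor <;> linarith

theorem bddAbove_reductionRatio_image (hg : ∀ x, x ≤ 0 → x ≤ g x ∧ g x ≤ 0) :
    BddAbove (reductionRatio g '' Set.Iio 0) :=
  ⟨1, Set.forall_mem_image.2 fun _ hy => (reductionRatio_mem_Icc hg hy).2⟩

theorem sSup_reductionRatio_mem_Icc (hg : ∀ x, x ≤ 0 → x ≤ g x ∧ g x ≤ 0) :
    sSup (reductionRatio g '' Set.Iio 0) ∈ Set.Icc 0 1 := by
  have hmem : reductionRatio g (-1) ∈ reductionRatio g '' Set.Iio 0 := ⟨-1, by norm_num, rfl⟩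
  exact ⟨(reductionRatio_mem_Icc hg (by norm_num)).1.trans
    (le_csSup (bddAbove_reductionRatio_image hg) hmem),
    csSup_le ⟨_, hmem⟩ (Set.forall_mem_image.2 fun _ hy => (reductionRatio_mem_Icc hg hy).2)⟩

theorem neg_add_le_neg_mul_sSup_reductionRatio (hg : ∀ x, x ≤ 0 → x ≤ g x ∧ g x ≤ 0) {y : ℝ}
    (hy : y ≤ 0) : -y + g y ≤ -y * sSup (reductionRatio g '' Set.Iio 0) := by
  rcases hy.lt_or_eq with hy | rfl
  · have hle : reductionRatio g y ≤ sSup (reductionRatio g '' Set.Iio 0) :=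
      le_csSup (bddAbove_reductionRatio_image hg) ⟨y, hy, rfl⟩
    calc -y + g y = -y * reductionRatio g y := by
          unfold reductionRatio; field_simp [hy.ne]; ring
      _ ≤ -y * sSup (reductionRatio g '' Set.Iio 0) := by gcongr; linarith
  · have hg0 : g 0 = 0 := le_antisymm (hg 0 le_rfl).2 (hg 0 le_rfl).1
    simp [hg0]

end ReductionRatio

theorem entropy_bonus_reduction_general [Fintype A]
    (α : ℝ) (hα : 0 < α) (g : ℝ → ℝ) (cg : ℝ) (hg : isBounding g cg)
    (pol : A → ℝ) (hpos : ∀ a, 0 < pol a) (hsum : ∑ a, pol a = 1) :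
    (0 ≤ sSup ((fun y => 1 - g y / y) '' Set.Iio 0) ∧
        sSup ((fun y => 1 - g y / y) '' Set.Iio 0) ≤ 1) ∧
      ∑ a, pol a * (-(α * Real.log (pol a)) + g (α * Real.log (pol a))) ≤
        α * sSup ((fun y => 1 - g y / y) '' Set.Iio 0) *
          Real.log (Fintype.card A : ℝ) := by
  obtain ⟨-, -, -, hneg, -, -⟩ := hg
  set Δ := sSup (reductionRatio g '' Set.Iio 0)
  have hΔ : Δ ∈ Set.Icc 0 1 := sSup_reductionRatio_mem_Icc hneg
  refine ⟨hΔ, ?_⟩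
  have hscaled_log_nonpos : ∀ a, α * Real.log (pol a) ≤ 0 := fun a =>
    mul_nonpos_of_nonneg_of_nonpos hα.le <| Real.log_nonpos (hpos a).le <|
      hsum ▸ single_le_sum (fun b _ => (hpos b).le) (mem_univ a)
  calc ∑ a, pol a * (-(α * Real.log (pol a)) + g (α * Real.log (pol a)))
      ≤ ∑ a, pol a * (-(α * Real.log (pol a)) * Δ) := sum_le_sum fun a _ =>
        mul_le_mul_of_nonneg_left (neg_add_le_neg_mul_sSup_reductionRatio hneg
          (hscaled_log_nonpos a)) (hpos a).le
    _ = α * Δ * ∑ a, Real.negMulLog (pol a) := by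
        simp only [Real.negMulLog, mul_sum]; congr! 1 with a; ring
    _ ≤ α * Δ * Real.log (Fintype.card A : ℝ) := by
        gcongr
        · exact mul_nonneg hα.le hΔ.1
        · exact Real.sum_negMulLog_le_log_card pol (fun a => (hpos a).le) hsum

/-- entropy-bonus reduction bound: `0 ≤ Δ̄_g ≤ 1` and
`∑_a π(a)(−α log π(a) + g(α log π(a))) ≤ α Δ̄_g log|𝒜|`,
where `Δ̄_g = sup_{y<0}(1 − g(y)/y)`. -/
theorem entropy_bonus_reduction [Fintype A] [Nonempty A]
    (α : ℝ) (hα : 0 < α) (g : ℝ → ℝ) (cg : ℝ) (hg : isBounding g cg)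
    (pol : A → ℝ) (hpos : ∀ a, 0 < pol a) (hsum : ∑ a, pol a = 1) :
    (0 ≤ sSup ((fun y => 1 - g y / y) '' Set.Iio 0) ∧
        sSup ((fun y => 1 - g y / y) '' Set.Iio 0) ≤ 1) ∧
      ∑ a, pol a * (-(α * Real.log (pol a)) + g (α * Real.log (pol a))) ≤
        α * sSup ((fun y => 1 - g y / y) '' Set.Iio 0) *
          Real.log (Fintype.card A : ℝ) :=
  entropy_bonus_reduction_general α hα g cg hg pol hpos hsum

end
end

section
/- (Entropy-term error reduction.) Fix a finite MDP, α > 0, κ ∈ [0,1), set τ = (1−κ)α, and fix a bounding function g. Let V*_τ : S → ℝ satisfy V*_τ(s) = (L^τ(R + γ P V*_τ))(s) for all s; set Q*_τ = R + γ P V*_τ, A*_τ(s,a) = Q*_τ(s,a) − V*_τ(s), and π* = G^τ(Q*_τ). Let Ψ : S×𝒜 → ℝ, let π = G^α(Ψ) and A(s,a) = Ψ(s,a) − (L^α Ψ)(s). Define Δ^{Hg}(s) = ∑_a π*(a|s)·[κ·A*_τ(s,a) − γ·∑_{s'} P(s'|s,a)·∑_{a'} π(a'|s')·(A(s',a') −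 g(A(s',a')))] and Δ^{HId}(s) = κ·∑_a π*(a|s)·A*_τ(s,a) = −κ·τ·H(π*)(s). Then: (i) Δ^{HId}(s) ≤ Δ^{Hg}(s) for all s; and (ii) if γ·α·(P^{π*} H(π))(s) ≤ κ·τ·H(π*)(s) for all s, then Δ^{Hg}(s) ≤ 0 for all s, and consequently |Δ^{Hg}(s)| ≤ |Δ^{HId}(s)| for all s. -/
/-!
Both `Δ`'s share the term `κ ∑ₐ π*(a|s) A*_τ(s,a)`, which is `−κτ H(π*)(s)` because
`V*_τ = L^τ Q*_τ` makes `A*_τ = τ log π*`. What `g` adds is `−γ P^{π*} W`, where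
`W(s') = ∑ₐ π(a|s') (A(s',a) − g(A(s',a)))`. Soft advantages are nonpositive and `x ≤ x − g x ≤ 0`
for `x ≤ 0`, so `−α H(π)(s') ≤ W(s') ≤ 0`: the extra term is nonnegative and at most
`γα (P^{π*} H(π))(s)`, which the hypothesis of (ii) bounds by `κτ H(π*)(s)`.
-/

open Finset Filter

noncomputable section

variable {S A : Type*}

section Softmax

variable [Fintype A]

lemma gibbs_nonneg (β : ℝ) (Q : S → A → ℝ) (s : S) (a : A) : 0 ≤ gibbs β Q s a :=
  div_nonneg (Real.exp_pos _).le (sum_nonneg fun _ _ => (Real.exp_pos _).le)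

variable [Nonempty A]

lemma sum_exp_pos (f : A → ℝ) : 0 < ∑ a, Real.exp (f a) :=
  sum_pos (fun _ _ => Real.exp_pos _) univ_nonempty

lemma gibbs_le_one (β : ℝ) (Q : S → A → ℝ) (s : S) (a : A) : gibbs β Q s a ≤ 1 :=
  (div_le_one (sum_exp_pos _)).2 <|
    single_le_sum (f := fun b => Real.exp (Q s b / β)) (fun _ _ => (Real.exp_pos _).le)
      (mem_univ a)

lemma mul_log_gibbs {β : ℝ} (hβ : β ≠ 0) (Q : S → A → ℝ) (s : S) (a : A) :
    β * Real.log (gibbs β Q s a) = adv β Q s a := by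
  rw [gibbs, adv, lse, Real.log_div (Real.exp_ne_zero _) (sum_exp_pos _).ne', Real.log_exp]
  field_simp

lemma sum_gibbs_mul_adv {β : ℝ} (hβ : β ≠ 0) (Q : S → A → ℝ) (s : S) :
    ∑ a, gibbs β Q s a * adv β Q s a = -(β * ent (gibbs β Q) s) := by
  rw [ent, mul_neg, neg_neg, mul_sum]
  refine sum_congr rfl fun a _ => ?_
  rw [← mul_log_gibbs hβ Q s a]
  ring

lemma adv_nonpos_s18 {β : ℝ} (hβ : 0 < β) (Q : S → A → ℝ) (s : S) (a : A) : adv β Q s a ≤ 0 := by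
  rw [← mul_log_gibbs hβ.ne' Q s a]
  exact mul_nonpos_of_nonneg_of_nonpos hβ.le
    (Real.log_nonpos (gibbs_nonneg β Q s a) (gibbs_le_one β Q s a))

end Softmax

lemma isBounding.le_sub_of_nonpos {h : ℝ → ℝ} {c x : ℝ} (hh : isBounding h c) (hx : x ≤ 0) :
    x ≤ x - h x := by
  linarith [(hh.2.2.2.1 x hx).2]

lemma isBounding.sub_nonpos_of_nonpos {h : ℝ → ℝ} {c x : ℝ} (hh : isBounding h c)
    (hx : x ≤ 0) : x - h x ≤ 0 := by
  linarith [(hh.2.2.2.1 x hx).1]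

section Residual

variable [Fintype A]

def advResidual (α : ℝ) (g : ℝ → ℝ) (Ψ : S → A → ℝ) (s : S) : ℝ :=
  ∑ a, gibbs α Ψ s a * (adv α Ψ s a - g (adv α Ψ s a))

variable [Nonempty A] {α c : ℝ} {g : ℝ → ℝ}

lemma advResidual_nonpos (hα : 0 < α) (hg : isBounding g c) (Ψ : S → A → ℝ) (s : S) :
    advResidual α g Ψ s ≤ 0 :=
  sum_nonpos fun a _ => mul_nonpos_of_nonneg_of_nonpos (gibbs_nonneg α Ψ s a)
    (hg.sub_nonpos_of_nonpos (adv_nonpos_s18 hα Ψ s a))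

lemma neg_mul_ent_le_advResidual (hα : 0 < α) (hg : isBounding g c) (Ψ : S → A → ℝ)
    (s : S) : -(α * ent (gibbs α Ψ) s) ≤ advResidual α g Ψ s := by
  rw [← sum_gibbs_mul_adv hα.ne']
  exact sum_le_sum fun a _ => mul_le_mul_of_nonneg_left
    (hg.le_sub_of_nonpos (adv_nonpos_s18 hα Ψ s a)) (gibbs_nonneg α Ψ s a)

end Residual

section Ppi

variable [Fintype S] [Fintype A] {P : S → A → S → ℝ} {π : S → A → ℝ}

lemma Ppi_mono (hP : ∀ s a s', 0 ≤ P s a s') (hπ : ∀ s a, 0 ≤ π s a) {W W' : S → ℝ}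
    (hW : ∀ s, W s ≤ W' s) (s : S) : Ppi P π W s ≤ Ppi P π W' s :=
  sum_le_sum fun a _ => mul_le_mul_of_nonneg_left
    (sum_le_sum fun s' _ => mul_le_mul_of_nonneg_left (hW s') (hP s a s')) (hπ s a)

lemma Ppi_const_mul (c : ℝ) (W : S → ℝ) (s : S) :
    Ppi P π (fun s' => c * W s') s = c * Ppi P π W s := by
  simp only [Ppi, mul_sum]
  exact sum_congr rfl fun a _ => sum_congr rfl fun s' _ => by ring

lemma Ppi_zero (s : S) : Ppi P π (fun _ => 0) s = 0 := by
  simp [Ppi]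

lemma sum_mul_sub_eq_sub_Ppi (κ γ : ℝ) (X : S → A → ℝ) (W : S → ℝ) (s : S) :
    ∑ a, π s a * (κ * X s a - γ * ∑ s', P s a s' * W s') =
      κ * ∑ a, π s a * X s a - γ * Ppi P π W s := by
  simp only [Ppi, mul_sub, mul_sum, sum_sub_distrib]
  congr 1
  · exact sum_congr rfl fun a _ => by ring
  · exact sum_congr rfl fun a _ => sum_congr rfl fun s' _ => by ring

end Ppi

theorem entropy_term_error_reduction_general [Fintype S] [Fintype A] [Nonempty A]
    (P : S → A → S → ℝ) (R : S → A → ℝ) (γ α κ cg : ℝ) (g : ℝ → ℝ)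
    (hP : isKernel P)
    (hγ0 : 0 < γ) (hα : 0 < α) (hκ1 : κ < 1)
    (hg : isBounding g cg)
    (Vτ : S → ℝ)
    (hVτ : ∀ s, Vτ s = lse ((1 - κ) * α) (fun s1 a1 => R s1 a1 + γ * PV P Vτ s1 a1) s)
    (Ψ : S → A → ℝ) :
    let τ := (1 - κ) * α
    let Qτ := fun s a => R s a + γ * PV P Vτ s a
    let polstar := gibbs τ Qτ
    let Aτ := fun s a => Qτ s a - Vτ s
    let polψ := gibbs α Ψ
    let Aψ := adv α Ψ
    let ΔHg := fun s : S =>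
      ∑ a, polstar s a *
        (κ * Aτ s a -
          γ * ∑ s', P s a s' * ∑ a', polψ s' a' * (Aψ s' a' - g (Aψ s' a')))
    let ΔHId := fun s : S => κ * ∑ a, polstar s a * Aτ s a
    (∀ s, ΔHId s = -(κ * τ * ent polstar s)) ∧
      (∀ s, ΔHId s ≤ ΔHg s) ∧
      ((∀ s, γ * α * Ppi P polstar (ent polψ) s ≤ κ * τ * ent polstar s) →
        (∀ s, ΔHg s ≤ 0) ∧ ∀ s, |ΔHg s| ≤ |ΔHId s|) := by
  intro τ Qτ polstar Aτ polψ Aψ ΔHg ΔHId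
  have hτ : τ ≠ 0 := mul_ne_zero (by linarith) hα.ne'
  have hπ : ∀ s a, 0 ≤ polstar s a := gibbs_nonneg τ Qτ
  have hId : ∀ s, ΔHId s = -(κ * τ * ent polstar s) := fun s => by
    have hAτ : ∀ a, Aτ s a = adv τ Qτ s a := fun a => congrArg (Qτ s a - ·) (hVτ s)
    simp only [ΔHId, hAτ, sum_gibbs_mul_adv hτ Qτ s, polstar]
    ring
  have hsplit : ∀ s, ΔHg s = ΔHId s - γ * Ppi P polstar (advResidual α g Ψ) s :=
    sum_mul_sub_eq_sub_Ppi κ γ Aτ _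
  have hcorr_nonpos : ∀ s, Ppi P polstar (advResidual α g Ψ) s ≤ 0 := fun s =>
    (Ppi_mono hP.1 hπ (advResidual_nonpos hα hg Ψ) s).trans_eq (Ppi_zero s)
  have hmono : ∀ s, ΔHId s ≤ ΔHg s := fun s => by
    nlinarith [hsplit s, hcorr_nonpos s]
  refine ⟨hId, hmono, fun hcond => ?_⟩
  have hcorr_ge : ∀ s, -(α * Ppi P polstar (ent polψ) s) ≤ Ppi P polstar (advResidual α g Ψ) s :=
    fun s => by
      rw [← neg_mul, ← Ppi_const_mul]
      exact Ppi_mono hP.1 hπ (fun s' => by simpa using neg_mul_ent_le_advResidual hα hg Ψ s') s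
  have hle0 : ∀ s, ΔHg s ≤ 0 := fun s => by
    nlinarith [hsplit s, hId s, hcorr_ge s, hcond s]
  refine ⟨hle0, fun s => ?_⟩
  rw [abs_of_nonpos (hle0 s), abs_of_nonpos ((hmono s).trans (hle0 s))]
  exact neg_le_neg (hmono s)

/-- entropy-term error reduction:
`Δ^{HId} = −κτH(π*)`, `Δ^{HId}(s) ≤ Δ^{Hg}(s)`, and if
`γα(P^{π*}H(π))(s) ≤ κτH(π*)(s)` for all `s`, then `Δ^{Hg}(s) ≤ 0` and
`|Δ^{Hg}(s)| ≤ |Δ^{HId}(s)|` for all `s`. -/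
theorem entropy_term_error_reduction [Fintype S] [Fintype A] [Nonempty S] [Nonempty A]
    (P : S → A → S → ℝ) (R : S → A → ℝ) (Rmax γ α κ cg : ℝ) (g : ℝ → ℝ)
    (hP : isKernel P) (hR : ∀ s a, |R s a| ≤ Rmax) (hRmax : 0 ≤ Rmax)
    (hγ0 : 0 < γ) (hγ1 : γ < 1) (hα : 0 < α) (hκ0 : 0 ≤ κ) (hκ1 : κ < 1)
    (hg : isBounding g cg)
    (Vτ : S → ℝ)
    (hVτ : ∀ s, Vτ s = lse ((1 - κ) * α) (fun s1 a1 => R s1 a1 + γ * PV P Vτ s1 a1) s)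
    (Ψ : S → A → ℝ) :
    let τ := (1 - κ) * α
    let Qτ := fun s a => R s a + γ * PV P Vτ s a
    let polstar := gibbs τ Qτ
    let Aτ := fun s a => Qτ s a - Vτ s
    let polψ := gibbs α Ψ
    let Aψ := adv α Ψ
    let ΔHg := fun s : S =>
      ∑ a, polstar s a *
        (κ * Aτ s a -
          γ * ∑ s', P s a s' * ∑ a', polψ s' a' * (Aψ s' a' - g (Aψ s' a')))
    let ΔHId := fun s : S => κ * ∑ a, polstar s a * Aτ s a
    (∀ s, ΔHId s = -(κ * τ * ent polstar s)) ∧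
      (∀ s, ΔHId s ≤ ΔHg s) ∧
      ((∀ s, γ * α * Ppi P polstar (ent polψ) s ≤ κ * τ * ent polstar s) →
        (∀ s, ΔHg s ≤ 0) ∧ ∀ s, |ΔHg s| ≤ |ΔHId s|) :=
  entropy_term_error_reduction_general P R γ α κ cg g hP hγ0 hα hκ1 hg Vτ hVτ Ψ

end
end
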